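/- Let (K(a)|K,v) be an algebraic extension of valued fields, where a is a pseudo limit of a pseudo Cauchy sequence (a_ν)_{ν<λ} in (K,v) that has no pseudo limit in K. Then (a_ν)_{ν<λ} does not fix the value of the minimal polynomial f of a over K; that is, the values v f(a_ν) are not ultimately constant (they are ultimately strictly increasing). -/

import Mathlib

/-! Common definitions for formalizing Blaszczok–Kuhlmann,
"Algebraic independence of elements in immediate extensions of valued fields". -/

universe u

namespace ValuedExt

variable {Γ : Type*} [LinearOrderedCommGroupWithZero Γ]

/-- The value group `vK` of a valued field `(K,v)`, as a subgroup of the units of `Γ`. -/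
def valGroup {K : Type*} [Field K] (v : Valuation K Γ) : Subgroup Γˣ :=
  (Units.map v.toMonoidWithZeroHom.toMonoidHom).range

/-- An extension `(L|K,v)` of valued fields (along the embedding `f`) is immediate if the
canonical embedding of value groups and the canonical embedding of residue fields are onto.
Expressed elementwise: every value of `L` is a value of `K`, and every residue of `L` is the
residue of an element of `K`. -/
def IsImmediate {K L : Type*} [Field K] [Field L] (f : K →+* L) (v : Valuation L Γ) : Prop :=
  (∀ x : L, x ≠ 0 → ∃ y : K, v (f y) = v x) ∧
  (∀ x : L, v x ≤ 1 → ∃ y : K, v (x - f y) < 1)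

/-- A valued field `(K,v)` is maximal if it admits no proper immediate extension. -/
def IsMaximalField {K : Type u} [Field K] (v : Valuation K Γ) : Prop :=
  ∀ (L : Type u) [Field L] (f : K →+* L) (w : Valuation L Γ),
    w.comap f = v → IsImmediate f w → Function.Surjective f

/-- The residue field `Kv` of a valued field `(K,v)`. -/
abbrev resField {K : Type*} [Field K] (v : Valuation K Γ) : Type _ :=
  IsLocalRing.ResidueField ↥v.valuationSubring

/-- The embedding of valuation rings induced by an embedding of valued fields. -/
def integerMap {K L : Type*} [Field K] [Field L] (f : K →+* L) (v : Valuation L Γ) :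
    ↥(v.comap f).valuationSubring →+* ↥v.valuationSubring where
  toFun x := ⟨f x.1, x.2⟩
  map_one' := Subtype.ext (map_one f)
  map_mul' x y := Subtype.ext (map_mul f x.1 y.1)
  map_zero' := Subtype.ext (map_zero f)
  map_add' x y := Subtype.ext (map_add f x.1 y.1)

instance integerMap_isLocalHom {K L : Type*} [Field K] [Field L] (f : K →+* L)
    (v : Valuation L Γ) : IsLocalHom (integerMap f v) := by
  constructor
  intro a ha
  obtain ⟨u, hu⟩ := ha
  have hval : v (f a.1) = 1 := by
    have h1 : v ((u : ↥v.valuationSubring) : L) * v (((u⁻¹ : _) : ↥v.valuationSubring) : L)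
        = 1 := by
      rw [← Valuation.map_mul]
      norm_cast
      rw [mul_inv_cancel]
      exact v.map_one
    have hle : v ((u : ↥v.valuationSubring) : L) ≤ 1 := (u : ↥v.valuationSubring).2
    have hle' : v (((u⁻¹ : _) : ↥v.valuationSubring) : L) ≤ 1 :=
      ((u⁻¹ : (↥v.valuationSubring)ˣ) : ↥v.valuationSubring).2
    have hx : v ((u : ↥v.valuationSubring) : L) = 1 := by
      rcases lt_or_eq_of_le hle with hlt | heq
      · exfalso
        have : v ((u : ↥v.valuationSubring) : L) * v (((u⁻¹ : _) : ↥v.valuationSubring) : L)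
            < 1 := by
          calc v _ * v _ ≤ v ((u : ↥v.valuationSubring) : L) * 1 := by
                gcongr
            _ = v ((u : ↥v.valuationSubring) : L) := mul_one _
            _ < 1 := hlt
        rw [h1] at this
        exact lt_irrefl _ this
      · exact heq
    have : ((u : ↥v.valuationSubring) : L) = f a.1 := by
      rw [hu]; rfl
    rw [← this]
    exact hx
  have ha0 : a.1 ≠ 0 := by
    intro h0
    rw [h0, map_zero, Valuation.map_zero] at hval
    exact zero_ne_one hval
  have hinvmem : (a.1)⁻¹ ∈ (v.comap f).valuationSubring := by
    rw [Valuation.mem_valuationSubring_iff, map_inv₀]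
    show (v (f a.1))⁻¹ ≤ 1
    rw [hval, inv_one]
  refine IsUnit.of_mul_eq_one ⟨(a.1)⁻¹, hinvmem⟩ ?_
  exact Subtype.ext (mul_inv_cancel₀ ha0)

/-- The embedding of residue fields induced by an embedding of valued fields. -/
noncomputable def residueMap {K L : Type*} [Field K] [Field L] (f : K →+* L)
    (v : Valuation L Γ) : resField (v.comap f) →+* resField v :=
  IsLocalRing.ResidueField.map (integerMap f v)

/-- The transcendence degree of a field extension given by an embedding `f`. -/
noncomputable def trdeg {K L : Type*} [Field K] [Field L] (f : K →+* L) : Cardinal :=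
  letI : Algebra K L := f.toAlgebra
  ⨆ s : {s : Set L // AlgebraicIndependent K ((↑) : s → L)}, Cardinal.mk s.1

/-- The characteristic exponent of a field: `p` if the characteristic is `p > 0`, and `1` if the
characteristic is `0`. -/
noncomputable def charExponent (R : Type*) [CommSemiring R] : ℕ := max (ringChar R) 1

/-- A valued field `(K,v)` is henselian if `v` extends uniquely (up to equivalence) to the
algebraic closure of `K`. -/
def IsHenselian {K : Type u} [Field K] {Γ' : Type*} [LinearOrderedCommGroupWithZero Γ']
    (v : Valuation K Γ') : Prop :=
  ∀ (Γ₁ Γ₂ : Type u) [LinearOrderedCommGroupWithZero Γ₁] [LinearOrderedCommGroupWithZero Γ₂]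
    (w₁ : Valuation (AlgebraicClosure K) Γ₁) (w₂ : Valuation (AlgebraicClosure K) Γ₂),
    (w₁.comap (algebraMap K (AlgebraicClosure K))).IsEquiv v →
    (w₂.comap (algebraMap K (AlgebraicClosure K))).IsEquiv v →
    w₁.IsEquiv w₂

/-- The subfield `F^p` of `p`-th powers of a field `F` (as the subfield generated by the `p`-th
powers; in characteristic `p` it is exactly the set of `p`-th powers). -/
def pPowSubfield (F : Type*) [Field F] (p : ℕ) : Subfield F :=
  Subfield.closure (Set.range fun x : F => x ^ p)

/-- The degree `[F : F^p]`, as a cardinal. -/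
noncomputable def pDegreeRes (F : Type*) [Field F] (p : ℕ) : Cardinal :=
  Module.rank ↥(pPowSubfield F p) F

/-- The subgroup `p·G` of `p`-th powers (multiplicatively) of a subgroup `G` of `Γˣ`. -/
def pMulSubgroup {G : Type*} [CommGroup G] (H : Subgroup G) (p : ℕ) : Subgroup G :=
  H.map (powMonoidHom p)

/-- The cardinality of the quotient `H/N` (of the subgroup `N ⊓ H` in `H`). -/
noncomputable def quotCard {G : Type*} [CommGroup G] (H N : Subgroup G) : Cardinal :=
  Cardinal.mk (↥H ⧸ N.subgroupOf H)

/-- The index `(vK : p·vK)` for the value group of a valuation, as a cardinal. -/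
noncomputable def pIndexVal {K : Type*} [Field K] (v : Valuation K Γ) (p : ℕ) : Cardinal :=
  quotCard (valGroup v) (pMulSubgroup (valGroup v) p)

/-- The field `K^{1/p}` of `p`-th roots of elements of `K`, inside a fixed algebraic closure. -/
noncomputable def pRootField (K : Type u) [Field K] (p : ℕ) [Fact p.Prime] [CharP K p] :
    Subfield (AlgebraicClosure K) :=
  Subfield.comap (frobenius (AlgebraicClosure K) p)
    (algebraMap K (AlgebraicClosure K)).fieldRange

/-- The canonical embedding `K → K^{1/p}`. -/
noncomputable def pRootEmb (K : Type u) [Field K] (p : ℕ) [Fact p.Prime] [CharP K p] :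
    K →+* ↥(pRootField K p) where
  toFun x := ⟨algebraMap K (AlgebraicClosure K) x, by
    rw [pRootField, Subfield.mem_comap]
    exact ⟨x ^ p, by rw [map_pow]; rfl⟩⟩
  map_one' := Subtype.ext (map_one _)
  map_mul' x y := Subtype.ext (map_mul _ x y)
  map_zero' := Subtype.ext (map_zero _)
  map_add' x y := Subtype.ext (map_add _ x y)

section AuxPCS

variable {Γ : Type*} [LinearOrderedCommGroupWithZero Γ]
variable {ι : Type*} [LinearOrder ι]

/-- Pair stabilization, core case `j < k`. -/
lemma pcs_pair_core (hnomax : ∀ i : ι, ∃ j, i < j)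
    {γ : ι → Γ} {i₀ : ι}
    (hdec : ∀ σ τ : ι, i₀ ≤ σ → σ < τ → γ τ < γ σ)
    (hnz : ∀ ν, i₀ ≤ ν → γ ν ≠ 0)
    {cj ck : Γ} (hck : ck ≠ 0) {j k : ℕ} (hjk : j < k) :
    ∃ i₁, i₀ ≤ i₁ ∧
      ((∀ ν, i₁ ≤ ν → cj * γ ν ^ j < ck * γ ν ^ k) ∨
       (∀ ν, i₁ ≤ ν → ck * γ ν ^ k < cj * γ ν ^ j)) := by
  by_cases H : ∃ ν₁, i₀ ≤ ν₁ ∧ ck * γ ν₁ ^ k ≤ cj * γ ν₁ ^ j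
  · obtain ⟨ν₁, hν₁, hle⟩ := H
    obtain ⟨i₁, hi₁⟩ := hnomax ν₁
    refine ⟨i₁, hν₁.trans hi₁.le, Or.inr ?_⟩
    intro ν hν
    have hγν : γ ν < γ ν₁ := hdec ν₁ ν hν₁ (lt_of_lt_of_le hi₁ hν)
    have hγν0 : γ ν ≠ 0 := hnz ν (hν₁.trans (hi₁.le.trans hν))
    have hγν₁0 : γ ν₁ ≠ 0 := hnz ν₁ hν₁
    have hkeq : k = (k - j) + j := (Nat.sub_add_cancel hjk.le).symm
    have key₁ : ck * γ ν₁ ^ (k - j) ≤ cj := by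
      rw [hkeq, pow_add, ← mul_assoc] at hle
      exact le_of_mul_le_mul_right hle (zero_lt_iff.2 (pow_ne_zero _ hγν₁0))
    have key₂ : ck * γ ν ^ (k - j) < ck * γ ν₁ ^ (k - j) := by
      have := pow_lt_pow_left₀ hγν zero_le' (Nat.sub_ne_zero_of_lt hjk)
      exact (mul_lt_mul_iff_right₀ (zero_lt_iff.2 hck)).2 this
    calc ck * γ ν ^ k = (ck * γ ν ^ (k - j)) * γ ν ^ j := by
          rw [mul_assoc, ← pow_add, ← hkeq]
      _ < cj * γ ν ^ j :=
          (mul_lt_mul_iff_left₀ (zero_lt_iff.2 (pow_ne_zero _ hγν0))).2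
            (lt_of_lt_of_le key₂ key₁)
  · push_neg at H
    exact ⟨i₀, le_rfl, Or.inl fun ν hν => H ν hν⟩

/-- Pair stabilization, general case. -/
lemma pcs_pair (hnomax : ∀ i : ι, ∃ j, i < j)
    {γ : ι → Γ} {i₀ : ι}
    (hdec : ∀ σ τ : ι, i₀ ≤ σ → σ < τ → γ τ < γ σ)
    (hnz : ∀ ν, i₀ ≤ ν → γ ν ≠ 0)
    {cj ck : Γ} (hcj : cj ≠ 0) (hck : ck ≠ 0) {j k : ℕ} (hne : j ≠ k) :
    ∃ i₁, i₀ ≤ i₁ ∧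
      ((∀ ν, i₁ ≤ ν → cj * γ ν ^ j < ck * γ ν ^ k) ∨
       (∀ ν, i₁ ≤ ν → ck * γ ν ^ k < cj * γ ν ^ j)) := by
  rcases hne.lt_or_gt with h | h
  · exact pcs_pair_core hnomax hdec hnz hck h
  · obtain ⟨i₁, h1, h2⟩ := pcs_pair_core hnomax hdec hnz hcj h
    exact ⟨i₁, h1, h2.symm⟩

/-- Eventually dominant term. -/
lemma pcs_argmax (hnomax : ∀ i : ι, ∃ j, i < j)
    {γ : ι → Γ} {i₀ : ι}
    (hdec : ∀ σ τ : ι, i₀ ≤ σ → σ < τ → γ τ < γ σ)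
    (hnz : ∀ ν, i₀ ≤ ν → γ ν ≠ 0)
    (c : ℕ → Γ) :
    ∀ S : Finset ℕ, (∀ k ∈ S, c k ≠ 0) → S.Nonempty →
      ∃ k₀ ∈ S, ∃ i₁, i₀ ≤ i₁ ∧ ∀ ν, i₁ ≤ ν → ∀ k ∈ S, k ≠ k₀ →
        c k * γ ν ^ k < c k₀ * γ ν ^ k₀ := by
  intro S
  induction S using Finset.induction_on with
  | empty => intro _ hS; simp at hS
  | @insert j S hjS ih =>
    intro hc _
    rcases S.eq_empty_or_nonempty with rfl | hS'
    · exact ⟨j, by simp, i₀, le_rfl, by simp⟩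
    · obtain ⟨k₀, hk₀S, i₁, hi₁, hmax⟩ :=
        ih (fun k hk => hc k (Finset.mem_insert_of_mem hk)) hS'
      have hdec' : ∀ σ τ : ι, i₁ ≤ σ → σ < τ → γ τ < γ σ :=
        fun σ τ hσ => hdec σ τ (hi₁.trans hσ)
      have hnz' : ∀ ν, i₁ ≤ ν → γ ν ≠ 0 := fun ν hν => hnz ν (hi₁.trans hν)
      have hne : j ≠ k₀ := fun h => hjS (h ▸ hk₀S)
      obtain ⟨i₂, hi₂, hcase⟩ := pcs_pair hnomax hdec' hnz'
        (hc j (Finset.mem_insert_self j S))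
        (hc k₀ (Finset.mem_insert_of_mem hk₀S)) hne
      rcases hcase with hL | hR
      · refine ⟨k₀, Finset.mem_insert_of_mem hk₀S, i₂, hi₁.trans hi₂,
          fun ν hν k hk hkne => ?_⟩
        rcases Finset.mem_insert.1 hk with rfl | hk
        · exact hL ν hν
        · exact hmax ν (hi₂.trans hν) k hk hkne
      · refine ⟨j, Finset.mem_insert_self j S, i₂, hi₁.trans hi₂,
          fun ν hν k hk hkne => ?_⟩
        rcases Finset.mem_insert.1 hk with rfl | hk
        · exact absurd rfl hkne
        · by_cases hkk : k = k₀
          · subst hkk; exact hR ν hν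
          · exact (hmax ν (hi₂.trans hν) k hk hkk).trans (hR ν hν)

end AuxPCS

universe v'

/-- if `a` (in an algebraic valued field extension of `K`) is a pseudo limit of a
pseudo Cauchy sequence in `(K,v)` without pseudo limit in `K`, then the sequence does not fix
the value of the minimal polynomial `f` of `a` over `K`: the values `v f(a_ν)` are ultimately
strictly increasing. (The valuation is multiplicative, so additively increasing values become
multiplicatively decreasing ones; the index set is a linear order without maximum, playing the
role of the limit ordinal `λ`.) -/
theorem minpoly_value_not_fixed_of_pseudo_limit
    {Γ : Type*} [LinearOrderedCommGroupWithZero Γ]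
    {K : Type u} {L : Type v'} [Field K] [Field L] [Algebra K L]
    (v : Valuation L Γ)
    {ι : Type*} [LinearOrder ι] [Nonempty ι] (hnomax : ∀ i : ι, ∃ j, i < j)
    (a : ι → K)
    -- `(a_ν)` is a pseudo Cauchy sequence in `(K, v)`:
    (hpc : ∀ ρ σ τ : ι, ρ < σ → σ < τ →
      (v.comap (algebraMap K L)) (a τ - a σ) < (v.comap (algebraMap K L)) (a σ - a ρ))
    -- without a pseudo limit in `K`:
    (hnolim : ¬ ∃ y : K, ∃ i₀ : ι, ∀ σ τ : ι, i₀ ≤ σ → σ < τ →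
      (v.comap (algebraMap K L)) (y - a τ) < (v.comap (algebraMap K L)) (y - a σ))
    -- `x` is algebraic over `K` and is a pseudo limit of `(a_ν)`:
    (x : L) (halg : IsAlgebraic K x)
    (hlim : ∃ i₀ : ι, ∀ σ τ : ι, i₀ ≤ σ → σ < τ →
      v (x - algebraMap K L (a τ)) < v (x - algebraMap K L (a σ))) :
    ∃ i₀ : ι, ∀ σ τ : ι, i₀ ≤ σ → σ < τ →
      (v.comap (algebraMap K L)) ((minpoly K x).eval (a τ)) <
        (v.comap (algebraMap K L)) ((minpoly K x).eval (a σ)) := by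

  obtain ⟨i₀, hlim⟩ := hlim
  set φ := algebraMap K L with hφ
  set γ : ι → Γ := fun ν => v (x - φ (a ν)) with hγdef
  have hdec : ∀ σ τ : ι, i₀ ≤ σ → σ < τ → γ τ < γ σ := hlim
  have hnz : ∀ ν, i₀ ≤ ν → γ ν ≠ 0 := by
    intro ν hν h0
    obtain ⟨j, hj⟩ := hnomax ν
    have := hdec ν j hν hj
    rw [h0] at this
    exact not_lt_of_ge zero_le' this
  have hx0 : (minpoly K x) ≠ 0 := minpoly.ne_zero halg.isIntegral
  set g : Polynomial L := (minpoly K x).map φ with hg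
  have hg0 : g ≠ 0 := (Polynomial.map_ne_zero_iff (algebraMap K L).injective).2 hx0
  set h : Polynomial L := Polynomial.taylor x g with hh
  have hh0 : h ≠ 0 := by
    intro H
    exact hg0 (Polynomial.taylor_injective x (by rw [← hh, H, map_zero]))
  have hc0 : h.coeff 0 = 0 := by
    rw [hh, Polynomial.taylor_coeff_zero, hg, Polynomial.eval_map,
      ← Polynomial.aeval_def, minpoly.aeval]
  have h0S : (0 : ℕ) ∉ h.support := by
    simp [Polynomial.mem_support_iff, hc0]
  set c : ℕ → Γ := fun k => v (h.coeff k) with hcdef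
  have hcne : ∀ k ∈ h.support, c k ≠ 0 := by
    intro k hk
    simpa [hcdef] using Polynomial.mem_support_iff.1 hk
  obtain ⟨k₀, hk₀, i₁, hi₁, hmax⟩ :=
    pcs_argmax hnomax hdec hnz c h.support hcne
      (Polynomial.support_nonempty.2 hh0)
  have hck₀ : c k₀ ≠ 0 := hcne k₀ hk₀
  have hvterm : ∀ ν k, v (h.coeff k * (φ (a ν) - x) ^ k) = c k * γ ν ^ k := by
    intro ν k
    rw [v.map_mul, v.map_pow, Valuation.map_sub_swap]
  have heval : ∀ ν, (v.comap φ) ((minpoly K x).eval (a ν)) =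
      v (∑ k ∈ h.support, h.coeff k * (φ (a ν) - x) ^ k) := by
    intro ν
    show v (φ ((minpoly K x).eval (a ν))) = _
    have h1 : φ ((minpoly K x).eval (a ν)) = g.eval (φ (a ν)) := by
      rw [hg, Polynomial.eval_map, Polynomial.eval₂_at_apply]
    rw [h1, ← Polynomial.taylor_eval_sub x g (φ (a ν)), ← hh,
      Polynomial.eval_eq_sum, Polynomial.sum_def]
  have hval : ∀ ν, i₁ ≤ ν → (v.comap φ) ((minpoly K x).eval (a ν)) =
      c k₀ * γ ν ^ k₀ := by
    intro ν hν
    have h0ne : v (h.coeff k₀ * (φ (a ν) - x) ^ k₀) ≠ 0 := by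
      rw [hvterm]
      exact mul_ne_zero hck₀ (pow_ne_zero _ (hnz ν (hi₁.trans hν)))
    have hrest : v (∑ k ∈ h.support.erase k₀, h.coeff k * (φ (a ν) - x) ^ k) <
        v (h.coeff k₀ * (φ (a ν) - x) ^ k₀) := by
      apply Valuation.map_sum_lt v h0ne
      intro k hk
      rw [hvterm, hvterm]
      exact hmax ν hν k (Finset.mem_of_mem_erase hk) (Finset.ne_of_mem_erase hk)
    rw [heval ν, ← Finset.add_sum_erase _ _ hk₀,
      Valuation.map_add_eq_of_lt_left v hrest, hvterm]
  refine ⟨i₁, fun σ τ hσ hτ => ?_⟩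
  rw [hval σ hσ, hval τ (hσ.trans hτ.le)]
  have hγlt : γ τ < γ σ := hdec σ τ (hi₁.trans hσ) hτ
  have hk₀0 : k₀ ≠ 0 := fun h' => h0S (h' ▸ hk₀)
  exact (mul_lt_mul_iff_right₀ (zero_lt_iff.2 hck₀)).2
    (pow_lt_pow_left₀ hγlt zero_le' hk₀0)

end ValuedExt
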